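/- For the warped product function φ(x) = (cos(n x/2))^{2/n} on (-π/n, π/n) with n ≥ 2, one has -2(n-1)·φ''/φ - (n-1)(n-2)·(φ')²/φ² = n(n-1) at every point of the interval. -/

import Mathlib

/-!
Writing `u = c t / 2`, the logarithmic derivative of `φ = cos(u) ^ (2 / c)` is `φ' / φ = -tan u`,
so `φ'' / φ = (φ' / φ)' + (φ' / φ) ^ 2 = tan² u - (c / 2) sec² u`. Substituting,
`-2 (c - 1) φ'' / φ - (c - 1) (c - 2) (φ' / φ) ^ 2 = c (c - 1) (sec² u - tan² u) = c (c - 1)`.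
-/

open Real

noncomputable def warp (c t : ℝ) : ℝ := cos (c * t / 2) ^ (2 / c)

section

variable {c t : ℝ}

lemma hasDerivAt_mul_div_two (c t : ℝ) : HasDerivAt (fun s => c * s / 2) (c / 2) t := by
  simpa using ((hasDerivAt_id t).const_mul c).div_const 2

lemma hasDerivAt_cos_mul_div_two (c t : ℝ) :
    HasDerivAt (fun s => cos (c * s / 2)) (-sin (c * t / 2) * (c / 2)) t :=
  (hasDerivAt_cos _).comp t (hasDerivAt_mul_div_two c t)

lemma hasDerivAt_warp (hc : c ≠ 0) (hcos : cos (c * t / 2) ≠ 0) :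
    HasDerivAt (warp c) (-warp c t * tan (c * t / 2)) t := by
  refine ((hasDerivAt_cos_mul_div_two c t).rpow_const (p := 2 / c) (Or.inl hcos)).congr_deriv ?_
  rw [warp, rpow_sub_one hcos, tan_eq_sin_div_cos]
  field_simp

lemma hasDerivAt_deriv_warp (hc : c ≠ 0) (hcos : cos (c * t / 2) ≠ 0) :
    HasDerivAt (deriv (warp c))
      (warp c t * (tan (c * t / 2) ^ 2 - c / (2 * cos (c * t / 2) ^ 2))) t := by
  have hcos_near : ∀ᶠ s in nhds t, cos (c * s / 2) ≠ 0 :=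
    (hasDerivAt_cos_mul_div_two c t).continuousAt.eventually_ne hcos
  have hderiv : deriv (warp c) =ᶠ[nhds t] fun s => -warp c s * tan (c * s / 2) :=
    hcos_near.mono fun s hs => (hasDerivAt_warp hc hs).deriv
  have htan : HasDerivAt (fun s => tan (c * s / 2)) (1 / cos (c * t / 2) ^ 2 * (c / 2)) t :=
    HasDerivAt.comp t (hasDerivAt_tan hcos) (hasDerivAt_mul_div_two c t)
  refine ((hasDerivAt_warp hc hcos).neg.mul htan).congr_of_eventuallyEq hderiv |>.congr_deriv ?_
  rw [Pi.neg_apply]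
  field_simp
  ring

-- `0 < cos` rather than `cos ≠ 0`: for a negative base, `rpow` can vanish.
lemma warp_scalar_curvature (hc : c ≠ 0) (hcos : 0 < cos (c * t / 2)) :
    -2 * (c - 1) * deriv (deriv (warp c)) t / warp c t
      - (c - 1) * (c - 2) * deriv (warp c) t ^ 2 / warp c t ^ 2 = c * (c - 1) := by
  have hwarp : warp c t ≠ 0 := (rpow_pos_of_pos hcos _).ne'
  rw [(hasDerivAt_deriv_warp hc hcos.ne').deriv, (hasDerivAt_warp hc hcos.ne').deriv,
    tan_eq_sin_div_cos]
  field_simp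
  linear_combination (-c * (c - 1)) * sin_sq_add_cos_sq (c * t / 2)

lemma cos_pos_of_mem_Ioo_pi_div (hc : 0 < c) (ht : t ∈ Set.Ioo (-(π / c)) (π / c)) :
    0 < cos (c * t / 2) := by
  obtain ⟨hlo, hhi⟩ := ht
  rw [neg_div', div_lt_iff₀ hc] at hlo
  rw [lt_div_iff₀ hc] at hhi
  apply cos_pos_of_mem_Ioo
  constructor <;> linarith

end

theorem stmt_14_general (n : ℕ) :
    ∀ x ∈ Set.Ioo (-(π / n)) (π / n),
      -2 * ((n : ℝ) - 1) *
          (deriv (deriv (fun t : ℝ => Real.cos ((n : ℝ) * t / 2) ^ ((2 : ℝ) / n))) x) /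
          (Real.cos ((n : ℝ) * x / 2) ^ ((2 : ℝ) / n))
        - ((n : ℝ) - 1) * ((n : ℝ) - 2) *
          (deriv (fun t : ℝ => Real.cos ((n : ℝ) * t / 2) ^ ((2 : ℝ) / n)) x) ^ 2 /
          (Real.cos ((n : ℝ) * x / 2) ^ ((2 : ℝ) / n)) ^ 2
        = (n : ℝ) * ((n : ℝ) - 1) := by
  intro x hx
  -- for `n = 0` the interval is `Ioo 0 0`
  have hn : (0 : ℝ) < n := by
    have hpi : 0 < π / n := by linarith [hx.1.trans hx.2]
    exact (div_pos_iff_of_pos_left pi_pos).mp hpi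
  exact warp_scalar_curvature hn.ne' (cos_pos_of_mem_Ioo_pi_div hn hx)

theorem stmt_14 (n : ℕ) (hn : 2 ≤ n) :
    ∀ x ∈ Set.Ioo (-(π / n)) (π / n),
      -2 * ((n : ℝ) - 1) *
          (deriv (deriv (fun t : ℝ => Real.cos ((n : ℝ) * t / 2) ^ ((2 : ℝ) / n))) x) /
          (Real.cos ((n : ℝ) * x / 2) ^ ((2 : ℝ) / n))
        - ((n : ℝ) - 1) * ((n : ℝ) - 2) *
          (deriv (fun t : ℝ => Real.cos ((n : ℝ) * t / 2) ^ ((2 : ℝ) / n)) x) ^ 2 /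
          (Real.cos ((n : ℝ) * x / 2) ^ ((2 : ℝ) / n)) ^ 2
        = (n : ℝ) * ((n : ℝ) - 1) :=
  stmt_14_general n
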